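/- Let h, a : ℝ → ℝ³ with a differentiable and a′(t) = h(t) ×ᵥ a(t) for all t (standard cross product). Set z(t) := √(a₁(t)² + a₂(t)²) and λ(t) := √(a₁(t)² + a₂(t)² + a₃(t)²), and assume z(t) ≠ 0 for all t. Let τ : ℝ → ℝ be differentiable with τ′(t) = −(a₁h₁ + a₂h₂)/z² for all t. Then for any constants A, B, C ∈ ℝ, the function x(t) := A·a(t) − (λ(t)B/z(t))·cos(λ(t)τ(t)+C)·(a₂, −a₁, 0) + (B/z(t))·sin(λ(t)τ(t)+C)·(a₃a₁, a₃a₂, −z²) is differentiable and satisfies x′(t) = h(t) ×ᵥ x(t) for all t. -/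

import Mathlib

/-!
Since `a′ = h × a`, the length `λ = |a|` is conserved. The unit vector `p = (a₂, -a₁, 0) / z`
satisfies `p′ = ω × p` for `ω = h + τ′ a`, and so does `a` (as `a × a = 0`), hence also `a × p`.
In the frame rotating with `ω`, `x - A a = B (-λ cos θ · p + sin θ · a × p)` with `θ = λ τ + C`
therefore turns about `a` at the rate `θ′ = λ τ′`, which is exactly what the remaining term
`-τ′ a × x` of `h × x = ω × x - τ′ a × x` demands, because `a × (a × p) = -λ² p`.
-/

open Matrix

section Calculus
variable {𝕜 : Type*} [NontriviallyNormedField 𝕜] [CompleteSpace 𝕜] {t : 𝕜}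

theorem HasDerivAt.dotProduct {n : Type*} [Fintype n] {f g : 𝕜 → n → 𝕜} {f' g' : n → 𝕜}
    (hf : HasDerivAt f f' t) (hg : HasDerivAt g g' t) :
    HasDerivAt (fun s => f s ⬝ᵥ g s) (f t ⬝ᵥ g' + f' ⬝ᵥ g t) t :=
  (dotProductBilin (R := 𝕜) (S := 𝕜) (A := 𝕜) (m := n)).toContinuousBilinearMap
    |>.hasDerivAt_of_bilinear (fun _ => hf) (fun _ => hg)

theorem HasDerivAt.cross {f g : 𝕜 → Fin 3 → 𝕜} {f' g' : Fin 3 → 𝕜}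
    (hf : HasDerivAt f f' t) (hg : HasDerivAt g g' t) :
    HasDerivAt (fun s => f s ⨯₃ g s) (f t ⨯₃ g' + f' ⨯₃ g t) t :=
  (crossProduct (R := 𝕜)).toContinuousBilinearMap
    |>.hasDerivAt_of_bilinear (fun _ => hf) (fun _ => hg)

theorem HasDerivAt.cross_of_rotation {ω : Fin 3 → 𝕜} {f g : 𝕜 → Fin 3 → 𝕜}
    (hf : HasDerivAt f (ω ⨯₃ f t) t) (hg : HasDerivAt g (ω ⨯₃ g t) t) :
    HasDerivAt (fun s => f s ⨯₃ g s) (ω ⨯₃ (f t ⨯₃ g t)) t := by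
  convert hf.cross hg using 1
  rw [leibniz_cross, add_comm]

end Calculus

theorem dotProduct_self_eq_of_hasDerivAt_cross {h a : ℝ → Fin 3 → ℝ}
    (ha : ∀ t, HasDerivAt a (h t ⨯₃ a t) t) (s t : ℝ) : a s ⬝ᵥ a s = a t ⬝ᵥ a t := by
  have hd : ∀ t, HasDerivAt (fun s => a s ⬝ᵥ a s) 0 t := fun t => by
    simpa [dotProduct_comm (h t ⨯₃ a t)] using (ha t).dotProduct (ha t)
  exact is_const_of_deriv_eq_zero (fun t => (hd t).differentiableAt) (fun t => (hd t).deriv) s t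

theorem hasDerivAt_precession {h : Fin 3 → ℝ} {a p : ℝ → Fin 3 → ℝ} {θ : ℝ → ℝ} {k L t : ℝ}
    (ha : HasDerivAt a (h ⨯₃ a t) t) (hp : HasDerivAt p ((h + k • a t) ⨯₃ p t) t)
    (hθ : HasDerivAt θ (L * k) t) (hap : a t ⬝ᵥ p t = 0) (haa : a t ⬝ᵥ a t = L ^ 2) :
    HasDerivAt (fun s => (-(L * Real.cos (θ s))) • p s + Real.sin (θ s) • (a s ⨯₃ p s))
      (h ⨯₃ ((-(L * Real.cos (θ t))) • p t + Real.sin (θ t) • (a t ⨯₃ p t))) t := by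
  set ω := h + k • a t
  have ha' : HasDerivAt a (ω ⨯₃ a t) t := by
    simpa [ω, LinearMap.map_add₂, LinearMap.map_smul₂] using ha
  have haap : a t ⨯₃ (a t ⨯₃ p t) = -(L ^ 2) • p t := by
    rw [cross_cross_eq_smul_sub_smul', hap, haa]; simp
  have hω : h = ω - k • a t := by simp [ω]
  refine (((hθ.cos.const_mul L).fun_neg.smul hp).add
    (hθ.sin.smul (ha'.cross_of_rotation hp))).congr_deriv ?_
  rw [hω]
  simp only [LinearMap.map_sub₂, LinearMap.smul_apply, map_add, map_smul, haap]
  module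

/-- The paper's `(a₂, -a₁, 0) / z`, written as `(v ×₃ e₃) / |v ×₃ e₃|`. -/
noncomputable def horizontalPerp (v : Fin 3 → ℝ) : Fin 3 → ℝ :=
  (√(v 0 ^ 2 + v 1 ^ 2))⁻¹ • (v ⨯₃ ![0, 0, 1])

theorem dotProduct_horizontalPerp (v : Fin 3 → ℝ) : v ⬝ᵥ horizontalPerp v = 0 := by
  simp [horizontalPerp]

theorem HasDerivAt.inv_sqrt {f : ℝ → ℝ} {f' t : ℝ} (hf : HasDerivAt f f' t) (ht : 0 < f t) :
    HasDerivAt (fun s => (√(f s))⁻¹) (-(f' / (2 * f t)) * (√(f t))⁻¹) t := by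
  refine ((hf.sqrt ht.ne').inv (Real.sqrt_ne_zero'.mpr ht)).congr_deriv ?_
  field_simp
  rw [Real.sq_sqrt ht.le]

theorem hasDerivAt_horizontalPerp {h : Fin 3 → ℝ} {a : ℝ → Fin 3 → ℝ} {t : ℝ}
    (ha : HasDerivAt a (h ⨯₃ a t) t) (hz : 0 < a t 0 ^ 2 + a t 1 ^ 2) :
    HasDerivAt (fun s => horizontalPerp (a s))
      ((h + (-((a t 0 * h 0 + a t 1 * h 1) / (a t 0 ^ 2 + a t 1 ^ 2))) • a t) ⨯₃
        horizontalPerp (a t)) t := by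
  have hq := ((hasDerivAt_pi.mp ha 0).fun_pow 2).fun_add ((hasDerivAt_pi.mp ha 1).fun_pow 2)
  have hu := ha.cross (hasDerivAt_const t ![(0 : ℝ), 0, 1])
  refine ((hq.inv_sqrt hz).smul hu).congr_deriv ?_
  simp only [horizontalPerp, map_smul, mul_comm _ (√_)⁻¹, mul_smul, ← smul_add]
  congr 1
  ext i
  fin_cases i <;>
    simp only [Fin.reduceFinMk, Fin.isValue, cross_apply, Pi.add_apply, Pi.smul_apply,
      Pi.zero_apply, smul_eq_mul, cons_val, Nat.cast_ofNat] <;>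
    field_simp <;> ring

theorem stmt_12 (h a : ℝ → Fin 3 → ℝ) (τ : ℝ → ℝ) (A B C : ℝ)
    (ha : ∀ t : ℝ, HasDerivAt a (h t ⨯₃ a t) t)
    (hz : ∀ t : ℝ, Real.sqrt (a t 0 ^ 2 + a t 1 ^ 2) ≠ 0)
    (hτ : ∀ t : ℝ, HasDerivAt τ
      (-((a t 0 * h t 0 + a t 1 * h t 1) / (a t 0 ^ 2 + a t 1 ^ 2))) t)
    (x : ℝ → Fin 3 → ℝ)
    (hx : ∀ t : ℝ, x t =
      A • a t
      - ((Real.sqrt (a t 0 ^ 2 + a t 1 ^ 2 + a t 2 ^ 2) * B /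
            Real.sqrt (a t 0 ^ 2 + a t 1 ^ 2)) *
          Real.cos (Real.sqrt (a t 0 ^ 2 + a t 1 ^ 2 + a t 2 ^ 2) * τ t + C)) •
            ![a t 1, -(a t 0), 0]
      + ((B / Real.sqrt (a t 0 ^ 2 + a t 1 ^ 2)) *
          Real.sin (Real.sqrt (a t 0 ^ 2 + a t 1 ^ 2 + a t 2 ^ 2) * τ t + C)) •
            ![a t 2 * a t 0, a t 2 * a t 1, -(a t 0 ^ 2 + a t 1 ^ 2)]) :
    ∀ t : ℝ, HasDerivAt x (h t ⨯₃ x t) t := by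
  intro t
  obtain ⟨L, hL⟩ : ∃ L, ∀ s, √(a s 0 ^ 2 + a s 1 ^ 2 + a s 2 ^ 2) = L :=
    ⟨√(a 0 ⬝ᵥ a 0), fun s => by
      rw [← dotProduct_self_eq_of_hasDerivAt_cross ha s 0, vec3_dotProduct]; ring_nf⟩
  have haa : a t ⬝ᵥ a t = L ^ 2 := by
    rw [← hL t, Real.sq_sqrt (by positivity), vec3_dotProduct]; ring
  have hx_frame : x = fun s => A • a s + B • ((-(L * Real.cos (L * τ s + C))) •
      horizontalPerp (a s) + Real.sin (L * τ s + C) • (a s ⨯₃ horizontalPerp (a s))) := by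
    ext s i
    rw [hx, hL]
    fin_cases i <;>
    simp only [horizontalPerp, Fin.reduceFinMk, Fin.isValue, cross_apply, Pi.add_apply,
      Pi.sub_apply, Pi.smul_apply, smul_eq_mul, cons_val] <;>
    ring
  have hp := hasDerivAt_horizontalPerp (ha t) (Real.sqrt_ne_zero'.mp (hz t))
  have hθ := ((hτ t).const_mul L).add_const C
  have hrot := hasDerivAt_precession (ha t) hp hθ (dotProduct_horizontalPerp (a t)) haa
  rw [hx_frame]
  refine (((ha t).const_smul A).add (hrot.const_smul B)).congr_deriv ?_
  simp only [map_add, map_smul]
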